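/- RT⊖ is not monotonic: there exist RT⊖ policies P ⊆ P' and a role A.r such that ⟦A.r⟧_P is not contained in ⟦A.r⟧_{P'}. Concretely, with distinct entities Company, Alice, Bob, for the policy P = {Company.verifycode ← Company.tester ⊖ Company.developer, Company.tester ← Alice, Company.tester ← Bob} and P' = P ∪ {Company.developer ← Alice}, one has Alice ∈ ⟦Company.verifycode⟧_P but Alice ∉ ⟦Company.verifycode⟧_{P'}. -/
import Mathlib


/-! ## Propositional general logic programs and the well-founded semantics -/

/-- A rule of a propositional general logic program over atoms `α`:
a head atom, a finite set of positive body atoms and a finite set of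
negative body atoms. -/
structure Rule (α : Type*) where
  head : α
  pos : Finset α
  neg : Finset α

/-- Derivability in the reduct of the program `P` with respect to the set `I`
of atoms assumed true: an atom is derivable if some rule of `P` has it as head,
all negative body atoms avoid `I`, and all positive body atoms are derivable. -/
inductive GammaDer {α : Type*} (P : Set (Rule α)) (I : Set α) : α → Prop
  | step (r : Rule α) (hr : r ∈ P) (hneg : ∀ b ∈ r.neg, b ∉ I)
      (hpos : ∀ b ∈ r.pos, GammaDer P I b) : GammaDer P I r.head

/-- The Gelfond–Lifschitz operator `Γ_P`. -/
def gamma {α : Type*} (P : Set (Rule α)) (I : Set α) : Set α := { a | GammaDer P I a }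

theorem gamma_antitone {α : Type*} (P : Set (Rule α)) : Antitone (gamma P) := by
  intro I J hIJ a ha
  induction ha with
  | step r hr hneg hpos ih =>
      exact GammaDer.step r hr (fun b hb hbI => hneg b hb (hIJ hbI)) ih

/-- The (monotone) square `Γ_P ∘ Γ_P` of the Gelfond–Lifschitz operator. -/
def gammaSq {α : Type*} (P : Set (Rule α)) : Set α →o Set α :=
  ⟨fun I => gamma P (gamma P I), fun _ _ h => gamma_antitone P (gamma_antitone P h)⟩

/-- The atoms true in the well-founded model of `P`
(the least fixed point of `Γ_P ∘ Γ_P`). -/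
def wfTrue {α : Type*} (P : Set (Rule α)) : Set α := OrderHom.lfp (gammaSq P)

/-- The atoms false in the well-founded model of `P`
(the complement of the greatest fixed point `Γ_P(lfp (Γ_P ∘ Γ_P))` of `Γ_P ∘ Γ_P`;
these are exactly the atoms belonging to an unfounded set). -/
def wfFalse {α : Type*} (P : Set (Rule α)) : Set α := (gamma P (wfTrue P))ᶜ

/-- The atoms undefined in the well-founded model of `P`. -/
def wfUndef {α : Type*} (P : Set (Rule α)) : Set α := (wfTrue P ∪ wfFalse P)ᶜ

/-- Derivability in a negation-free program: rules whose negative body is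
nonempty are never applicable. -/
inductive LHDer {α : Type*} (P : Set (Rule α)) : α → Prop
  | step (r : Rule α) (hr : r ∈ P) (hneg : r.neg = ∅)
      (hpos : ∀ b ∈ r.pos, LHDer P b) : LHDer P r.head

/-- The least Herbrand model of a negation-free program: the set of atoms
derivable from the rules (i.e. the least fixed point of its
immediate-consequence operator). -/
def leastModel {α : Type*} (P : Set (Rule α)) : Set α := { a | LHDer P a }

/-- The positive program `P⁺` obtained from `P` by deleting all negative body
literals from every rule. -/
def posProgram {α : Type*} (P : Set (Rule α)) : Set (Rule α) :=
  (fun r => ⟨r.head, r.pos, ∅⟩) '' P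

/-! ## RT⊖ policies and their semantic programs -/

/-- An RT⊖ credential over entities `E` and role names `R`. -/
inductive Credential (E R : Type*) where
  /-- Simple membership `A.r ← D`. -/
  | member (A : E) (r : R) (D : E)
  /-- Simple inclusion `A.r ← B.r1`. -/
  | incl (A : E) (r : R) (B : E) (r1 : R)
  /-- Linking inclusion `A.r ← A.r1.r2`. -/
  | link (A : E) (r r1 r2 : R)
  /-- Intersection inclusion `A.r ← B1.r1 ∩ B2.r2`. -/
  | inter (A : E) (r : R) (B1 : E) (r1 : R) (B2 : E) (r2 : R)
  /-- Exclusion `A.r ← B1.r1 ⊖ B2.r2`. -/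
  | exclusion (A : E) (r : R) (B1 : E) (r1 : R) (B2 : E) (r2 : R)

variable {E R : Type*}

/-- The clauses of the semantic program corresponding to a single credential.
An atom `r(A,B)` is represented as the triple `(r, A, B)`. -/
def clausesOf [DecidableEq E] [DecidableEq R] : Credential E R → Set (Rule (R × E × E))
  | .member A r D => {⟨(r, A, D), ∅, ∅⟩}
  | .incl A r B r1 => { rl | ∃ Z, rl = ⟨(r, A, Z), {(r1, B, Z)}, ∅⟩ }
  | .link A r r1 r2 => { rl | ∃ Y Z, rl = ⟨(r, A, Z), {(r1, A, Y), (r2, Y, Z)}, ∅⟩ }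
  | .inter A r B1 r1 B2 r2 => { rl | ∃ Z, rl = ⟨(r, A, Z), {(r1, B1, Z), (r2, B2, Z)}, ∅⟩ }
  | .exclusion A r B1 r1 B2 r2 => { rl | ∃ Z, rl = ⟨(r, A, Z), {(r1, B1, Z)}, {(r2, B2, Z)}⟩ }

/-- The semantic program `SP(P)` of an RT⊖ policy `P`. -/
def SP [DecidableEq E] [DecidableEq R] (P : Set (Credential E R)) :
    Set (Rule (R × E × E)) := ⋃ c ∈ P, clausesOf c

/-- The semantics `⟦A.r⟧_P` of the role `A.r`: the set of entities `Z` such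
that the atom `r(A,Z)` is true in the well-founded model of `SP(P)`. -/
def roleSem [DecidableEq E] [DecidableEq R] (P : Set (Credential E R)) (A : E) (r : R) :
    Set E := { Z | (r, A, Z) ∈ wfTrue (SP P) }

/-- Replacing an exclusion credential `A.r ← B1.r1 ⊖ B2.r2` by the simple
inclusion `A.r ← B1.r1`; other credentials are unchanged. -/
def contextCred : Credential E R → Credential E R
  | .exclusion A r B1 r1 _ _ => .incl A r B1 r1
  | c => c

/-- The context policy `P+` of an RT⊖ policy `P`. -/
def contextPolicy (P : Set (Credential E R)) : Set (Credential E R) := contextCred '' P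

/-- A credential is an RT0 credential if it is not an exclusion credential. -/
def isRT0 : Credential E R → Prop
  | .exclusion _ _ _ _ _ _ => False
  | _ => True

inductive Ent where
  | company | alice | bob
deriving DecidableEq

inductive Rol where
  | verifycode | tester | developer
deriving DecidableEq

def Pex : Set (Credential Ent Rol) :=
  { .exclusion .company .verifycode .company .tester .company .developer,
    .member .company .tester .alice,
    .member .company .tester .bob }

def Pex' : Set (Credential Ent Rol) :=
  Pex ∪ { .member .company .developer .alice }

lemma mem_SP_Pex {rl : Rule (Rol × Ent × Ent)} :
    rl ∈ SP Pex ↔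
      rl ∈ clausesOf (Credential.exclusion Ent.company Rol.verifycode Ent.company
        Rol.tester Ent.company Rol.developer) ∨
      rl ∈ clausesOf (Credential.member Ent.company Rol.tester Ent.alice) ∨
      rl ∈ clausesOf (Credential.member Ent.company Rol.tester Ent.bob) := by
  simp [SP, Pex]
  try tauto

lemma mem_SP_Pex' {rl : Rule (Rol × Ent × Ent)} :
    rl ∈ SP Pex' ↔
      rl ∈ SP Pex ∨
      rl ∈ clausesOf (Credential.member Ent.company Rol.developer Ent.alice) := by
  simp [SP, Pex', Pex, mem_SP_Pex]
  try tauto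

lemma GammaDer_inv {α : Type*} {P : Set (Rule α)} {I : Set α} {a : α}
    (h : GammaDer P I a) :
    ∃ r ∈ P, r.head = a ∧ (∀ b ∈ r.neg, b ∉ I) ∧ ∀ b ∈ r.pos, GammaDer P I b := by
  cases h with
  | step r hr hneg hpos => exact ⟨r, hr, rfl, hneg, hpos⟩

lemma not_dev_Pex (I : Set (Rol × Ent × Ent)) :
    ¬ GammaDer (SP Pex) I (Rol.developer, Ent.company, Ent.alice) := by
  intro h
  obtain ⟨r, hr, hhead, hneg, hpos⟩ := GammaDer_inv h
  rcases mem_SP_Pex.mp hr with h | h | h <;>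
    simp only [clausesOf, Set.mem_setOf_eq, Set.mem_singleton_iff] at h
  · obtain ⟨Z, rfl⟩ := h; simp_all
  · subst h; simp_all
  · subst h; simp_all

lemma tester_alice_Pex (I : Set (Rol × Ent × Ent)) :
    GammaDer (SP Pex) I (Rol.tester, Ent.company, Ent.alice) := by
  have := GammaDer.step (P := SP Pex) (I := I)
    (⟨(Rol.tester, Ent.company, Ent.alice), ∅, ∅⟩ : Rule (Rol × Ent × Ent))
    (mem_SP_Pex.mpr (Or.inr (Or.inl rfl))) (by simp) (by simp)
  exact this

lemma dev_alice_Pex' (I : Set (Rol × Ent × Ent)) :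
    GammaDer (SP Pex') I (Rol.developer, Ent.company, Ent.alice) := by
  have := GammaDer.step (P := SP Pex') (I := I)
    (⟨(Rol.developer, Ent.company, Ent.alice), ∅, ∅⟩ : Rule (Rol × Ent × Ent))
    (mem_SP_Pex'.mpr (Or.inr rfl)) (by simp) (by simp)
  exact this

lemma wfTrue_eq {α : Type*} (P : Set (Rule α)) :
    wfTrue P = gamma P (gamma P (wfTrue P)) :=
  (OrderHom.map_lfp (gammaSq P)).symm

/-- RT⊖ is not monotonic: `Pex ⊆ Pex'` but
`⟦Company.verifycode⟧_{Pex} ⊄ ⟦Company.verifycode⟧_{Pex'}`; concretely Alice is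
a member under `Pex` but not under `Pex'`. -/
theorem rt_ominus_not_monotonic :
    Pex ⊆ Pex' ∧
    ¬ roleSem Pex .company .verifycode ⊆ roleSem Pex' .company .verifycode ∧
    Ent.alice ∈ roleSem Pex .company .verifycode ∧
    Ent.alice ∉ roleSem Pex' .company .verifycode := by
  have hmem : Ent.alice ∈ roleSem Pex .company .verifycode := by
    show (Rol.verifycode, Ent.company, Ent.alice) ∈ wfTrue (SP Pex)
    rw [wfTrue_eq]
    have := GammaDer.step (P := SP Pex) (I := gamma (SP Pex) (wfTrue (SP Pex)))
      (⟨(Rol.verifycode, Ent.company, Ent.alice),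
        {(Rol.tester, Ent.company, Ent.alice)},
        {(Rol.developer, Ent.company, Ent.alice)}⟩ : Rule (Rol × Ent × Ent))
      (mem_SP_Pex.mpr (Or.inl ⟨Ent.alice, rfl⟩))
      (by
        intro b hb
        simp only [Finset.mem_singleton] at hb
        subst hb
        exact not_dev_Pex _)
      (by
        intro b hb
        simp only [Finset.mem_singleton] at hb
        subst hb
        exact tester_alice_Pex _)
    exact this
  have hnot : Ent.alice ∉ roleSem Pex' .company .verifycode := by
    intro h
    have h' : (Rol.verifycode, Ent.company, Ent.alice) ∈ wfTrue (SP Pex') := h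
    rw [wfTrue_eq] at h'
    obtain ⟨r, hr, hhead, hneg, hpos⟩ := GammaDer_inv h'
    rcases mem_SP_Pex'.mp hr with h | h
    · rcases mem_SP_Pex.mp h with h | h | h <;>
        simp only [clausesOf, Set.mem_setOf_eq, Set.mem_singleton_iff] at h
      · obtain ⟨Z, rfl⟩ := h
        simp only [Prod.mk.injEq] at *
        have : Z = Ent.alice := by simp_all
        subst this
        exact hneg _ (Finset.mem_singleton_self _) (dev_alice_Pex' _)
      · subst h; simp_all
      · subst h; simp_all
    · simp only [clausesOf, Set.mem_singleton_iff] at h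
      subst h; simp_all
  refine ⟨fun c hc => Or.inl hc, fun hsub => hnot (hsub hmem), hmem, hnot⟩
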